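/- Let b ∈ ℕ³ and a = b − e_i, and suppose K^b I is ⟨ij,ik,jk⟩ and K^a I is ⟨j,k⟩. Then the degree-1 canonical sylvan matrix D^{a,b} (rows indexed by the vertices j,k of K^a I, columns by the edges of K^b I) is: D_{j,ij} = (−1)^{i,ij}/2, D_{k,ij} = (−1)^{j,ij}/2; D_{j,ik} = (−1)^{k,ik}/2, D_{k,ik} = (−1)^{i,ik}/2; and D_{v,jk} = 0 for v ∈ {j,k}. -/

import Mathlib

open Classical

noncomputable section

namespace Sylvan

/-- Exponent vectors in three variables. -/
abbrev V3 := Fin 3 → ℕ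

/-- The `i`-th standard basis vector. -/
def stdVec (i : Fin 3) : V3 := fun j => if j = i then 1 else 0

/-- A monomial ideal, identified with its (upward closed) set of exponent vectors. -/
def IsMonomialIdeal (I : Set V3) : Prop :=
  ∀ ⦃c d : V3⦄, c ∈ I → (∀ i, c i ≤ d i) → d ∈ I

/-- The 0-1 indicator vector of a squarefree face. -/
def ind (τ : Finset (Fin 3)) : V3 := fun i => if i ∈ τ then 1 else 0

/-- The Koszul simplicial complex of `I` in degree `b`:
faces `τ` with `b ≥ τ` and `x^(b-τ) ∈ I`. -/
def K (I : Set V3) (b : V3) : Set (Finset (Fin 3)) :=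
  {τ | (∀ i, ind τ i ≤ b i) ∧ (fun i => b i - ind τ i) ∈ I}

/-- `x^a` is a minimal monomial generator of `I`. -/
def IsMinGen (I : Set V3) (a : V3) : Prop :=
  a ∈ I ∧ ∀ c ∈ I, (∀ i, c i ≤ a i) → c = a

/-- Reduced simplicial chains: formal `k`-linear combinations of faces
(the empty face included). -/
abbrev Ch (k : Type) [Field k] := Finset (Fin 3) →₀ k

variable (k : Type) [Field k]

/-- The sign `(-1)^(position of v in σ)`. -/
def esgn (v : Fin 3) (σ : Finset (Fin 3)) : ℤ :=
  (-1 : ℤ) ^ (σ.filter (fun u => u < v)).card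

/-- The boundary of a single face. -/
def bd (σ : Finset (Fin 3)) : Ch k :=
  ∑ v ∈ σ, Finsupp.single (σ.erase v) ((esgn v σ : ℤ) : k)

/-- The (reduced) simplicial boundary operator. -/
def bdry : Ch k →ₗ[k] Ch k :=
  Finsupp.lsum k fun σ => LinearMap.toSpanSingleton k (Ch k) (bd k σ)

/-- `coeffSign k v σ` is the coefficient of `σ \ {v}` in `∂σ`,
i.e. the sign `(-1)^{v,σ}` of the paper. -/
def coeffSign (v : Fin 3) (σ : Finset (Fin 3)) : k :=
  bdry k (Finsupp.single σ (1:k)) (σ.erase v)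

/-- Faces of cardinality `c` (dimension `c-1`) of a simplicial complex. -/
def faces (Kc : Set (Finset (Fin 3))) (c : ℕ) : Set (Finset (Fin 3)) :=
  {σ | σ ∈ Kc ∧ σ.card = c}

/-- Basis chains attached to a set of faces. -/
def sset (A : Set (Finset (Fin 3))) : Set (Ch k) :=
  (fun σ => Finsupp.single σ (1:k)) '' A

/-- The chain group `C̃_{c-1}(K;k)`, as the span of its card-`c` faces. -/
def chains (Kc : Set (Finset (Fin 3))) (c : ℕ) : Submodule k (Ch k) :=
  Submodule.span k (sset k (faces Kc c))

/-- The boundaries `B̃_{c-1}(K;k) = ∂ C̃_c(K;k)`, sitting among card-`c` chains. -/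
def bdries (Kc : Set (Finset (Fin 3))) (c : ℕ) : Submodule k (Ch k) :=
  (chains k Kc (c+1)).map (bdry k)

/-- A shrubbery in dimension `c-1` (faces of cardinality `c`): a set `T` of card-`c`
faces whose boundaries form a basis of `∂ C̃_{c-1}(K;k)`. -/
def IsShrubbery (Kc : Set (Finset (Fin 3))) (c : ℕ) (T : Finset (Finset (Fin 3))) : Prop :=
  (T : Set (Finset (Fin 3))) ⊆ faces Kc c ∧
  LinearIndependent k
    (fun σ : (T : Set (Finset (Fin 3))) => bdry k (Finsupp.single (σ : Finset (Fin 3)) (1:k))) ∧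
  Submodule.span k ((fun σ => bdry k (Finsupp.single σ (1:k))) '' (T : Set (Finset (Fin 3)))) =
    (chains k Kc c).map (bdry k)

/-- A stake set in dimension `c-1` (faces of cardinality `c`): a set `S` of card-`c`
faces whose complement maps to a basis of `C̃/B̃`. -/
def IsStakeSet (Kc : Set (Finset (Fin 3))) (c : ℕ) (S : Finset (Finset (Fin 3))) : Prop :=
  (S : Set (Finset (Fin 3))) ⊆ faces Kc c ∧
  Submodule.span k (sset k (faces Kc c \ (S : Set (Finset (Fin 3))))) ⊓ bdries k Kc c = ⊥ ∧
  Submodule.span k (sset k (faces Kc c \ (S : Set (Finset (Fin 3))))) ⊔ bdries k Kc c =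
    chains k Kc c

/-- The circuit `ζ(τ)` of a face `τ` with respect to a shrubbery `T`:
the unique cycle of the form `τ - t` with `t ∈ span T`. -/
def circuit (T : Finset (Finset (Fin 3))) (τ : Finset (Fin 3)) : Ch k :=
  if h : ∃! z : Ch k, bdry k z = 0 ∧
      Finsupp.single τ (1:k) - z ∈ Submodule.span k (sset k (T : Set (Finset (Fin 3))))
  then h.exists.choose else 0

/-- The shrub `s(σ)` of a stake `σ` with respect to a hedge `(S,T)`:
the unique chain in `span T` whose boundary has coefficient `1` on `σ` and `0`
on all other stakes. -/
def shrub (S T : Finset (Finset (Fin 3))) (σ : Finset (Fin 3)) : Ch k :=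
  if h : ∃! s : Ch k, s ∈ Submodule.span k (sset k (T : Set (Finset (Fin 3)))) ∧
      bdry k s σ = 1 ∧ ∀ σ' ∈ S, σ' ≠ σ → bdry k s σ' = 0
  then h.exists.choose else 0

/-- The hedge rim `r(τ)` of a face `τ` with respect to a stake set `S`:
the unique chain supported outside `S` with `τ - r(τ)` a boundary. -/
def hedgeRim (Kc : Set (Finset (Fin 3))) (c : ℕ) (S : Finset (Finset (Fin 3)))
    (τ : Finset (Fin 3)) : Ch k :=
  if h : ∃! r : Ch k,
      r ∈ Submodule.span k (sset k (faces Kc c \ (S : Set (Finset (Fin 3))))) ∧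
      Finsupp.single τ (1:k) - r ∈ bdries k Kc c
  then h.exists.choose else 0

/-- The points of the saturated decreasing lattice path from `pt a d n` down to `a`
encoded by the list of directions `d` (read from `a` upwards). -/
def pt (a : V3) {n : ℕ} (d : Fin n → Fin 3) (m : ℕ) : V3 :=
  fun i => a i + ∑ m' ∈ Finset.range m, (if h : m' < n then stdVec (d ⟨m', h⟩) i else 0)

/-- The data of a hedgerow: `(Sb, S, T, Ta)`. -/
abbrev HRData (n : ℕ) :=
  Finset (Finset (Fin 3)) × (Fin (n+1) → Finset (Finset (Fin 3))) ×
    (Fin (n+1) → Finset (Finset (Fin 3))) × Finset (Finset (Fin 3))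

/-- A hedgerow in homological dimension `c-1` along the lattice path from `pt a d n`
down to `a`: a stake set in the Koszul complex at the top, a hedge at each interior
lattice point, and a shrubbery at the bottom.  (Unused components are pinned to `∅`.) -/
def IsHedgerow (I : Set V3) (a : V3) {n : ℕ} (d : Fin n → Fin 3) (c : ℕ)
    (h : HRData n) : Prop :=
  IsStakeSet k (K I (pt a d n)) c h.1 ∧
  (∀ m : Fin (n+1), 0 < (m:ℕ) → (m:ℕ) < n →
    IsStakeSet k (K I (pt a d m)) (c-1) (h.2.1 m) ∧
    IsShrubbery k (K I (pt a d m)) c (h.2.2.1 m)) ∧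
  (∀ m : Fin (n+1), ((m:ℕ) = 0 ∨ (m:ℕ) = n) → h.2.1 m = ∅ ∧ h.2.2.1 m = ∅) ∧
  IsShrubbery k (K I a) (c-1) h.2.2.2

/-- `Δ_{c-1,λ} I`: the number of hedgerows along the lattice path. -/
def Delta (I : Set V3) (a : V3) {n : ℕ} (d : Fin n → Fin 3) (c : ℕ) : ℕ :=
  Nat.card {h : HRData n // IsHedgerow k I a d c h}

/-- The data of a chain-link fence: a hedgerow together with the faces `τ_ℓ` and
`σ_ℓ` (indexed here by the lattice point `pt a d m`, so `τ_ℓ = tau (n-ℓ)` and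
`σ_ℓ = sig (n-ℓ)`). -/
abbrev FData (n : ℕ) :=
  HRData n × (Fin (n+1) → Finset (Fin 3)) × (Fin (n+1) → Finset (Fin 3))

/-- A chain-link fence from the card-`c` face `τtop` of the Koszul complex at the top
of the lattice path to the card-`(c-1)` face `σbot` of the Koszul complex at the
bottom. -/
def IsFence (I : Set V3) (a : V3) {n : ℕ} (d : Fin n → Fin 3) (c : ℕ)
    (σbot τtop : Finset (Fin 3)) (f : FData n) : Prop :=
  IsHedgerow k I a d c f.1 ∧
  (∀ m : Fin (n+1), 0 < (m:ℕ) → f.2.1 m ∈ faces (K I (pt a d m)) c) ∧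
  (∀ m : Fin (n+1), (m:ℕ) < n → f.2.2 m ∈ faces (K I (pt a d m)) (c-1)) ∧
  f.2.1 0 = ∅ ∧ f.2.2 (Fin.last n) = ∅ ∧
  hedgeRim k (K I (pt a d n)) c f.1.1 τtop (f.2.1 (Fin.last n)) ≠ 0 ∧
  (∀ m : Fin n, f.2.2 m.castSucc = (f.2.1 m.succ).erase (d m)) ∧
  (∀ m : Fin (n+1), 0 < (m:ℕ) → (m:ℕ) < n →
    f.2.2 m ∈ f.1.2.1 m ∧
    shrub k (f.1.2.1 m) (f.1.2.2.1 m) (f.2.2 m) (f.2.1 m) ≠ 0) ∧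
  circuit k f.1.2.2.2 (f.2.2 0) σbot ≠ 0

/-- The weight of a chain-link fence: the product of the boundary-link coefficient,
the chain-link coefficients, the containment coefficients, and the cycle-link
coefficient. -/
def weight (I : Set V3) (a : V3) {n : ℕ} (d : Fin n → Fin 3) (c : ℕ)
    (σbot τtop : Finset (Fin 3)) (f : FData n) : k :=
  hedgeRim k (K I (pt a d n)) c f.1.1 τtop (f.2.1 (Fin.last n)) *
  (∏ m : Fin (n+1), if 0 < (m:ℕ) ∧ (m:ℕ) < n
      then shrub k (f.1.2.1 m) (f.1.2.2.1 m) (f.2.2 m) (f.2.1 m) else 1) *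
  (∏ m : Fin n, bdry k (Finsupp.single (f.2.1 m.succ) (1:k)) (f.2.2 m.castSucc)) *
  circuit k f.1.2.2.2 (f.2.2 0) σbot

/-- `D_{σ,τ}^{a,b,λ}`: the contribution of the single lattice path `λ` (encoded by
its direction sequence `d`) to the canonical sylvan matrix entry. -/
def Dpath (I : Set V3) (a : V3) {n : ℕ} (d : Fin n → Fin 3) (c : ℕ)
    (σbot τtop : Finset (Fin 3)) : k :=
  ((Delta k I a d c : k))⁻¹ *
    ∑ᶠ f ∈ {f : FData n | IsFence k I a d c σbot τtop f}, weight k I a d c σbot τtop f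

/-- `|b - a|`, the common length of all saturated decreasing lattice paths. -/
def nlen (a b : V3) : ℕ := ∑ i, (b i - a i)

/-- The canonical sylvan matrix entry `D_{σ,τ}^{a,b}`: a sum over all saturated
decreasing lattice paths from `b` to `a`. -/
def D (I : Set V3) (a b : V3) (c : ℕ) (σbot τtop : Finset (Fin 3)) : k :=
  ∑ᶠ d ∈ {d : Fin (nlen a b) → Fin 3 | pt a d (nlen a b) = b},
    Dpath k I a d c σbot τtop

/-- `K` has exactly the set `F` as facets, i.e. it is the downward closure of `F`. -/
def hasFacets (Kc F : Set (Finset (Fin 3))) : Prop :=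
  Kc = {σ | ∃ f ∈ F, σ ⊆ f}

/-- `dim_k H̃₀(K;k) ≠ 0`: some reduced 0-cycle is not a boundary. -/
def H0nontrivial (Kc : Set (Finset (Fin 3))) : Prop :=
  ¬ (chains k Kc 1 ⊓ LinearMap.ker (bdry k) ≤ bdries k Kc 1)

/-!
The only lattice path from `b` down to `a = b - eᵢ` is the single step `i`. Since `K^b I` has
no triangle, its only stake set in dimension 1 is `∅` and every hedge rim is the edge itself;
since `K^a I` consists of the two points `j`, `l`, its shrubberies are `{{j}}` and `{{l}}`, so
`Δ = 2`. A fence from an edge `τ` is then determined by the shrubbery: it needs `τ ∖ {i}` to be a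
vertex of `K^a I` (which fails for `τ = jl`), and the circuit of `{j}` with respect to `{{ρ}}`
is `{j} - ρ`. Summing over the two shrubberies, for `τ ∖ {i} = {j}` the entry in row `σ` is
`∂τ({j}) · ({j} - {l})(σ) / 2`.
-/

variable {k}

section Chains

lemma apply_eq_zero_of_mem_span_sset {A : Set (Finset (Fin 3))} {z : Ch k}
    (hz : z ∈ Submodule.span k (sset k A)) {σ : Finset (Fin 3)} (hσ : σ ∉ A) : z σ = 0 := by
  induction hz using Submodule.span_induction with
  | mem x hx =>
    obtain ⟨τ, hτ, rfl⟩ := hx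
    exact Finsupp.single_eq_of_ne (fun h => hσ (h ▸ hτ))
  | zero => simp
  | add x y _ _ hx hy => simp [hx, hy]
  | smul c x _ hx => simp [hx]

lemma single_mem_span_sset {A : Set (Finset (Fin 3))} {τ : Finset (Fin 3)} (h : τ ∈ A) :
    Finsupp.single τ (1:k) ∈ Submodule.span k (sset k A) :=
  Submodule.subset_span ⟨τ, h, rfl⟩

lemma bdry_single_one (σ : Finset (Fin 3)) : bdry k (Finsupp.single σ (1:k)) = bd k σ := by
  simp [bdry, LinearMap.toSpanSingleton_apply]

lemma bdry_single_vertex {σ : Finset (Fin 3)} (hσ : σ.card = 1) :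
    bdry k (Finsupp.single σ (1:k)) = Finsupp.single ∅ 1 := by
  obtain ⟨v, rfl⟩ := Finset.card_eq_one.mp hσ
  have hsgn : esgn v {v} = 1 := by revert v; decide
  simp [bdry_single_one, bd, hsgn]

lemma esgn_pair_swap : ∀ u v : Fin 3, u ≠ v → esgn u {u, v} = -esgn v {u, v} := by decide

lemma coeffSign_pair_swap {u v : Fin 3} (h : u ≠ v) :
    coeffSign k v {u, v} = -coeffSign k u {u, v} := by
  have hcoeff : ∀ w ∈ ({u, v} : Finset (Fin 3)),
      coeffSign k w {u, v} = ((esgn w {u, v} : ℤ) : k) := fun w hw => by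
    rw [coeffSign, bdry_single_one, bd, Finset.sum_apply', Finset.sum_eq_single w]
    · simp
    · exact fun x hx hxw => Finsupp.single_eq_of_ne' fun he => hxw ((Finset.erase_inj _ hx).mp he)
    · exact fun h' => absurd hw h'
  rw [hcoeff u (by simp), hcoeff v (by simp), esgn_pair_swap u v h]
  push_cast
  ring

end Chains

section Complexes

lemma faces_eq_of_hasFacets {Kc F : Set (Finset (Fin 3))} {c : ℕ} (hK : hasFacets Kc F)
    (hF : ∀ f ∈ F, f.card = c) : faces Kc c = F := by
  ext σ
  rw [faces, hK]
  constructor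
  · rintro ⟨⟨f, hf, hσf⟩, hσ⟩
    rwa [Finset.eq_of_subset_of_card_le hσf (by rw [hF f hf, hσ])]
  · exact fun hσ => ⟨⟨σ, hσ, subset_rfl⟩, hF σ hσ⟩

lemma faces_succ_eq_empty_of_hasFacets {Kc F : Set (Finset (Fin 3))} {c : ℕ}
    (hK : hasFacets Kc F) (hF : ∀ f ∈ F, f.card = c) : faces Kc (c + 1) = ∅ := by
  refine Set.eq_empty_of_forall_notMem ?_
  rintro σ ⟨hσK, hσ⟩
  rw [hK] at hσK
  obtain ⟨f, hf, hσf⟩ := hσK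
  have := Finset.card_le_card hσf
  have := hF f hf
  omega

lemma bdries_eq_bot_of_faces_succ_eq_empty {Kc : Set (Finset (Fin 3))} {c : ℕ}
    (h : faces Kc (c + 1) = ∅) : bdries k Kc c = ⊥ := by
  simp [bdries, chains, h, sset]

end Complexes

section Hedges

variable {Kc : Set (Finset (Fin 3))} {c : ℕ}

lemma isStakeSet_iff_eq_empty (hB : bdries k Kc c = ⊥) (S : Finset (Finset (Fin 3))) :
    IsStakeSet k Kc c S ↔ S = ∅ := by
  constructor
  · rintro ⟨hSK, -, hspan⟩
    rw [hB, sup_bot_eq] at hspan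
    refine Finset.eq_empty_of_forall_notMem fun σ hσ => ?_
    have hσspan : Finsupp.single σ (1:k) ∈ chains k Kc c := single_mem_span_sset (hSK hσ)
    rw [← hspan] at hσspan
    simpa using apply_eq_zero_of_mem_span_sset hσspan (σ := σ) (by simp [hσ])
  · rintro rfl
    refine ⟨by simp, by rw [hB, inf_bot_eq], ?_⟩
    rw [hB, sup_bot_eq, chains]
    simp

lemma hedgeRim_empty_of_bdries_eq_bot (hB : bdries k Kc c = ⊥) {τ : Finset (Fin 3)}
    (hτ : τ ∈ faces Kc c) : hedgeRim k Kc c ∅ τ = Finsupp.single τ 1 := by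
  have hτrim : Finsupp.single τ (1:k) ∈
        Submodule.span k (sset k (faces Kc c \ ((∅ : Finset (Finset (Fin 3))) : Set _))) ∧
      Finsupp.single τ (1:k) - Finsupp.single τ 1 ∈ bdries k Kc c :=
    ⟨single_mem_span_sset (by simpa using hτ), by simp⟩
  have huniq : ∃! r : Ch k,
      r ∈ Submodule.span k (sset k (faces Kc c \ ((∅ : Finset (Finset (Fin 3))) : Set _))) ∧
      Finsupp.single τ (1:k) - r ∈ bdries k Kc c := by
    refine ⟨_, hτrim, fun r ⟨_, hr⟩ => ?_⟩
    rw [hB, Submodule.mem_bot, sub_eq_zero] at hr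
    exact hr.symm
  rw [hedgeRim, dif_pos huniq]
  exact huniq.unique huniq.exists.choose_spec hτrim

end Hedges

section Vertices

variable {Kc : Set (Finset (Fin 3))}

lemma map_bdry_chains_one (h : (faces Kc 1).Nonempty) :
    (chains k Kc 1).map (bdry k) = Submodule.span k {Finsupp.single ∅ 1} := by
  rw [chains, Submodule.map_span, sset, ← Set.image_comp]
  congr 1
  exact (Set.image_congr fun σ hσ => bdry_single_vertex hσ.2).trans (h.image_const _)

lemma isShrubbery_one_iff (h : (faces Kc 1).Nonempty) (T : Finset (Finset (Fin 3))) :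
    IsShrubbery k Kc 1 T ↔ ∃ σ ∈ faces Kc 1, T = {σ} := by
  have hvert : ∀ σ ∈ faces Kc 1, bdry k (Finsupp.single σ (1:k)) = Finsupp.single ∅ 1 :=
    fun σ hσ => bdry_single_vertex hσ.2
  constructor
  · rintro ⟨hTK, hli, hspan⟩
    have hsub : (T : Set (Finset (Fin 3))).Subsingleton := fun σ hσ ρ hρ =>
      congrArg Subtype.val (hli.injective (a₁ := ⟨σ, hσ⟩) (a₂ := ⟨ρ, hρ⟩)
        ((hvert σ (hTK hσ)).trans (hvert ρ (hTK hρ)).symm))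
    obtain hT | ⟨σ, hT⟩ := hsub.eq_empty_or_singleton
    · rw [Finset.coe_eq_empty] at hT
      subst hT
      rw [map_bdry_chains_one h, Finset.coe_empty, Set.image_empty, Submodule.span_empty,
        eq_comm, Submodule.span_singleton_eq_bot] at hspan
      simp at hspan
    · rw [Finset.coe_eq_singleton] at hT
      subst hT
      exact ⟨σ, hTK (by simp), rfl⟩
  · rintro ⟨σ, hσ, rfl⟩
    refine ⟨by simpa using hσ, ?_, ?_⟩
    · have : Subsingleton (({σ} : Finset (Finset (Fin 3))) : Set (Finset (Fin 3))) :=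
        ⟨fun x y => Subtype.ext <| by
          have hx := x.2
          have hy := y.2
          simp only [Finset.coe_singleton, Set.mem_singleton_iff] at hx hy
          rw [hx, hy]⟩
      refine LinearIndependent.of_subsingleton (⟨σ, by simp⟩ : ({σ} : Finset _)) ?_
      simp [hvert σ hσ]
    · simp [hvert σ hσ, map_bdry_chains_one h]

lemma setOf_isShrubbery_one (h : (faces Kc 1).Nonempty) :
    {T | IsShrubbery k Kc 1 T} = (fun σ => {σ}) '' faces Kc 1 := by
  ext T
  simp only [Set.mem_ofPred_eq, isShrubbery_one_iff h, Set.mem_image, eq_comm]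

lemma circuit_singleton_vertex {ρ σ : Finset (Fin 3)} (hρ : ρ.card = 1) (hσ : σ.card = 1) :
    circuit k {ρ} σ = Finsupp.single σ 1 - Finsupp.single ρ 1 := by
  have hspan : Submodule.span k (sset k (({ρ} : Finset (Finset (Fin 3))) : Set _)) =
      Submodule.span k {Finsupp.single ρ (1:k)} := by
    simp [sset]
  have hcycle : bdry k (Finsupp.single σ (1:k) - Finsupp.single ρ 1) = 0 := by
    rw [map_sub, bdry_single_vertex hσ, bdry_single_vertex hρ, sub_self]
  have hcirc : bdry k (Finsupp.single σ (1:k) - Finsupp.single ρ 1) = 0 ∧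
      Finsupp.single σ (1:k) - (Finsupp.single σ 1 - Finsupp.single ρ 1) ∈
        Submodule.span k (sset k (({ρ} : Finset (Finset (Fin 3))) : Set _)) := by
    rw [sub_sub_cancel, hspan]
    exact ⟨hcycle, Submodule.mem_span_singleton_self _⟩
  have huniq : ∃! z : Ch k, bdry k z = 0 ∧
      Finsupp.single σ (1:k) - z ∈ Submodule.span k (sset k (({ρ} : Finset _) : Set _)) := by
    refine ⟨_, hcirc, fun z ⟨hz, hzspan⟩ => ?_⟩
    rw [hspan, Submodule.mem_span_singleton] at hzspan
    obtain ⟨x, hx⟩ := hzspan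
    have hz' : z = Finsupp.single σ 1 - x • Finsupp.single ρ 1 := by rw [hx, sub_sub_cancel]
    rw [hz', map_sub, map_smul, bdry_single_vertex hσ, bdry_single_vertex hρ] at hz
    have hx1 : x = 1 := by
      have hempty := congrArg (· ∅) hz
      simp only [Finsupp.coe_sub, Finsupp.coe_smul, Pi.sub_apply, Pi.smul_apply,
        Finsupp.single_eq_same, smul_eq_mul, mul_one, Finsupp.coe_zero, Pi.zero_apply] at hempty
      linear_combination -hempty
    rw [hz', hx1, one_smul]
  rw [circuit, dif_pos huniq]
  exact huniq.unique huniq.exists.choose_spec hcirc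

end Vertices

section OneStepPath

lemma pt_one (a : V3) (d : Fin 1 → Fin 3) : pt a d 1 = a + stdVec (d 0) := by
  funext q
  simp [pt]

lemma pt_zero (a : V3) {n : ℕ} (d : Fin n → Fin 3) : pt a d 0 = a := by
  funext q
  simp [pt]

lemma stdVec_injective : Function.Injective stdVec := fun u v h => by
  by_contra huv
  simpa [stdVec, huv] using congrFun h u

lemma D_eq_Dpath_of_eq_add_stdVec {I : Set V3} {a b : V3} {i : Fin 3}
    (hB : ∀ q, b q = a q + stdVec i q) (c : ℕ) (σ τ : Finset (Fin 3)) :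
    D k I a b c σ τ = Dpath k I a (fun _ : Fin 1 => i) c σ τ := by
  obtain rfl : b = a + stdVec i := funext hB
  have hlen : nlen a (a + stdVec i) = 1 := by simp [nlen, stdVec]
  rw [D]
  generalize nlen a (a + stdVec i) = n at hlen
  subst hlen
  have hpaths : {d : Fin 1 → Fin 3 | pt a d 1 = a + stdVec i} = {fun _ => i} := by
    ext d
    simp only [Set.mem_ofPred_eq, Set.mem_singleton_iff, pt_one, add_right_inj,
      stdVec_injective.eq_iff]
    exact ⟨fun h => funext fun m => Subsingleton.elim m 0 ▸ h, fun h => h ▸ rfl⟩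
  rw [hpaths, finsum_mem_singleton]

end OneStepPath

section OneStepFences

/-- A path of length one has no interior lattice points, so once the top stake set is forced
to be empty a hedgerow is determined by its bottom shrubbery. -/
def oneStepHedgerow (T : Finset (Finset (Fin 3))) : HRData 1 := (∅, fun _ => ∅, fun _ => ∅, T)

def oneStepFence (T : Finset (Finset (Fin 3))) (τ σ : Finset (Fin 3)) : FData 1 :=
  (oneStepHedgerow T, ![∅, τ], ![σ, ∅])

variable {I : Set V3} {a b : V3} {d : Fin 1 → Fin 3} {c : ℕ}

lemma isHedgerow_one_iff (hd : pt a d 1 = b) (hB : bdries k (K I b) c = ⊥) (h : HRData 1) :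
    IsHedgerow k I a d c h ↔ ∃ T, IsShrubbery k (K I a) (c - 1) T ∧ h = oneStepHedgerow T := by
  obtain ⟨S, stakes, shrubs, T⟩ := h
  simp only [IsHedgerow, hd, isStakeSet_iff_eq_empty hB, oneStepHedgerow, Prod.mk.injEq]
  constructor
  · rintro ⟨rfl, -, hends, hT⟩
    refine ⟨T, hT, rfl, funext fun m => (hends m (by omega)).1,
      funext fun m => (hends m (by omega)).2, rfl⟩
  · rintro ⟨T, hT, rfl, rfl, rfl, rfl⟩
    exact ⟨rfl, fun _ _ h1 => absurd h1 (by omega), fun _ _ => ⟨rfl, rfl⟩, hT⟩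

lemma Delta_one_eq (hd : pt a d 1 = b) (hB : bdries k (K I b) c = ⊥) :
    Delta k I a d c = {T | IsShrubbery k (K I a) (c - 1) T}.ncard := by
  have hset : {h | IsHedgerow k I a d c h} =
      oneStepHedgerow '' {T | IsShrubbery k (K I a) (c - 1) T} := by
    ext h
    simp only [Set.mem_ofPred_eq, isHedgerow_one_iff hd hB, Set.mem_image, eq_comm]
  have hinj : Function.Injective oneStepHedgerow := fun T T' h => congrArg (·.2.2.2) h
  rw [Delta, ← Set.ncard_image_of_injective _ hinj, ← hset]
  exact Nat.card_coe_set_eq _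

lemma isFence_one_iff (hd : pt a d 1 = b) (hB : bdries k (K I b) c = ⊥) {τ : Finset (Fin 3)}
    (hτ : τ ∈ faces (K I b) c) (σbot : Finset (Fin 3)) (f : FData 1) :
    IsFence k I a d c σbot τ f ↔ τ.erase (d 0) ∈ faces (K I a) (c - 1) ∧
      ∃ T, (IsShrubbery k (K I a) (c - 1) T ∧ circuit k T (τ.erase (d 0)) σbot ≠ 0) ∧
        f = oneStepFence T τ (τ.erase (d 0)) := by
  obtain ⟨h, tops, bots⟩ := f
  have hrim : ∀ τ', hedgeRim k (K I b) c ∅ τ τ' ≠ 0 ↔ τ' = τ := fun τ' => by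
    rw [hedgeRim_empty_of_bdries_eq_bot hB hτ, Finsupp.single_apply_ne_zero]
    simp [eq_comm]
  simp only [IsFence, isHedgerow_one_iff hd hB, Fin.forall_fin_one, hd,
    oneStepFence, Prod.mk.injEq]
  constructor
  · rintro ⟨⟨T, hT, rfl⟩, -, hbots, htop0, hbot1, hrimτ, herase, -, hcirc⟩
    have htop1 : tops 1 = τ := (hrim _).mp hrimτ
    have hbot0 : bots 0 = τ.erase (d 0) := htop1 ▸ herase
    have hσ : bots 0 ∈ faces (K I a) (c - 1) := by simpa [pt_zero] using hbots 0
    refine ⟨hbot0 ▸ hσ, T, ⟨hT, hbot0 ▸ hcirc⟩, rfl, ?_, ?_⟩ <;>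
      funext m <;> fin_cases m <;> assumption
  · rintro ⟨hσ, T, ⟨hT, hcirc⟩, rfl, rfl, rfl⟩
    refine ⟨⟨T, hT, rfl⟩, ?_, ?_, rfl, rfl, (hrim τ).mpr rfl, rfl, ?_, hcirc⟩ <;>
      simp [Fin.forall_fin_two, hd, pt_zero, hτ, hσ]

lemma weight_oneStepFence (hd : pt a d 1 = b) (hB : bdries k (K I b) c = ⊥) {τ : Finset (Fin 3)}
    (hτ : τ ∈ faces (K I b) c) (σbot σ : Finset (Fin 3)) (T : Finset (Finset (Fin 3))) :
    weight k I a d c σbot τ (oneStepFence T τ σ) =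
      bdry k (Finsupp.single τ 1) σ * circuit k T σ σbot := by
  simp [weight, oneStepFence, oneStepHedgerow, hd, hedgeRim_empty_of_bdries_eq_bot hB hτ]

lemma Dpath_one_eq (hd : pt a d 1 = b) (hB : bdries k (K I b) c = ⊥) {τ : Finset (Fin 3)}
    (hτ : τ ∈ faces (K I b) c) (hσ : τ.erase (d 0) ∈ faces (K I a) (c - 1))
    (σbot : Finset (Fin 3)) :
    Dpath k I a d c σbot τ = ({T | IsShrubbery k (K I a) (c - 1) T}.ncard : k)⁻¹ *
      ∑ᶠ T ∈ {T | IsShrubbery k (K I a) (c - 1) T},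
        bdry k (Finsupp.single τ 1) (τ.erase (d 0)) * circuit k T (τ.erase (d 0)) σbot := by
  have hfences : {f | IsFence k I a d c σbot τ f} = (fun T => oneStepFence T τ (τ.erase (d 0))) ''
      {T | IsShrubbery k (K I a) (c - 1) T ∧ circuit k T (τ.erase (d 0)) σbot ≠ 0} := by
    ext f
    simp only [Set.mem_ofPred_eq, isFence_one_iff hd hB hτ, hσ, true_and, Set.mem_image, eq_comm]
  have hinj : Function.Injective fun T => oneStepFence T τ (τ.erase (d 0)) :=
    fun T T' h => congrArg (·.1.2.2.2) h
  rw [Dpath, Delta_one_eq hd hB, hfences, finsum_mem_image hinj.injOn]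
  simp only [weight_oneStepFence hd hB hτ]
  congr 1
  -- fences with a vanishing cycle-link coefficient contribute zero weight anyway
  refine finsum_mem_inter_support_eq' _ _ _ fun T hT => and_iff_left_of_imp fun _ => ?_
  exact right_ne_zero_of_mul hT

lemma Dpath_one_eq_zero (hd : pt a d 1 = b) (hB : bdries k (K I b) c = ⊥)
    {τ : Finset (Fin 3)} (hτ : τ ∈ faces (K I b) c) (hσ : τ.erase (d 0) ∉ faces (K I a) (c - 1))
    (σbot : Finset (Fin 3)) : Dpath k I a d c σbot τ = 0 := by
  have hfences : {f | IsFence k I a d c σbot τ f} = ∅ :=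
    Set.eq_empty_of_forall_notMem fun f hf => hσ ((isFence_one_iff hd hB hτ σbot f).mp hf).1
  rw [Dpath, hfences, finsum_mem_empty, mul_zero]

end OneStepFences

lemma Dpath_of_faces_one_eq_pair {I : Set V3} {a b : V3} {d : Fin 1 → Fin 3}
    (hd : pt a d 1 = b) (hB : bdries k (K I b) 2 = ⊥) {τ : Finset (Fin 3)}
    (hτ : τ ∈ faces (K I b) 2) {j l : Fin 3} (hjl : j ≠ l)
    (hKa : faces (K I a) 1 = {{j}, {l}}) (herase : τ.erase (d 0) = {j}) (σbot : Finset (Fin 3)) :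
    Dpath k I a d 2 σbot τ = bdry k (Finsupp.single τ 1) {j} *
      (Finsupp.single {j} 1 - Finsupp.single {l} 1 : Ch k) σbot / 2 := by
  have hjl' : ({j} : Finset (Fin 3)) ≠ {l} := by simpa using hjl
  have hshrubs : {T | IsShrubbery k (K I a) 1 T} = {{{j}}, {{l}}} := by
    rw [setOf_isShrubbery_one (by simp [hKa]), hKa, Set.image_pair]
  rw [Dpath_one_eq hd hB hτ (by simp [herase, hKa]), herase, show 2 - 1 = 1 from rfl, hshrubs,
    Set.ncard_pair (by simpa using hjl'), finsum_mem_pair (by simpa using hjl'),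
    circuit_singleton_vertex (by simp) (by simp), circuit_singleton_vertex (by simp) (by simp)]
  simp only [sub_self, Finsupp.coe_zero, Pi.zero_apply, mul_zero, zero_add]
  push_cast
  ring

theorem statement7_general (k : Type) [Field k]
    (I : Set V3) (a b : V3)
    (i j l : Fin 3) (hij : i ≠ j) (hil : i ≠ l) (hjl : j ≠ l)
    (hB : ∀ q, b q = a q + stdVec i q)
    (hKb : hasFacets (K I b) {{i, j}, {i, l}, {j, l}})
    (hKa : hasFacets (K I a) {{j}, {l}}) :
    D k I a b 2 {j} {i, j} = coeffSign k i {i, j} / 2 ∧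
    D k I a b 2 {l} {i, j} = coeffSign k j {i, j} / 2 ∧
    D k I a b 2 {j} {i, l} = coeffSign k l {i, l} / 2 ∧
    D k I a b 2 {l} {i, l} = coeffSign k i {i, l} / 2 ∧
    D k I a b 2 {j} {j, l} = 0 ∧
    D k I a b 2 {l} {j, l} = 0 := by
  have hd : pt a (fun _ : Fin 1 => i) 1 = b := by rw [pt_one]; exact (funext hB).symm
  have hedges : ∀ f ∈ ({{i, j}, {i, l}, {j, l}} : Set (Finset (Fin 3))), f.card = 2 := by
    simp [hij, hil, hjl]
  have hfacesb := faces_eq_of_hasFacets hKb hedges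
  have hbot : bdries k (K I b) 2 = ⊥ :=
    bdries_eq_bot_of_faces_succ_eq_empty (faces_succ_eq_empty_of_hasFacets hKb hedges)
  have hfacesa : faces (K I a) 1 = {{j}, {l}} := faces_eq_of_hasFacets hKa (by simp)
  have hij' := Dpath_of_faces_one_eq_pair hd hbot (by simp [hfacesb]) hjl hfacesa
    (Finset.erase_insert (by simpa using hij))
  have hil' := Dpath_of_faces_one_eq_pair hd hbot (by simp [hfacesb]) hjl.symm
    (hfacesa.trans (Set.pair_comm _ _)) (Finset.erase_insert (by simpa using hil))
  have hjl' := Dpath_one_eq_zero (c := 2) hd hbot (τ := {j, l}) (by simp [hfacesb])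
    (by simp [Finset.erase_eq_of_notMem, hij, hil, hfacesa, Finset.ext_iff, hjl, hjl.symm])
  have hsign_ij : coeffSign k i {i, j} = bdry k (Finsupp.single {i, j} 1) {j} := by
    rw [coeffSign, Finset.erase_insert (by simpa using hij)]
  have hsign_il : coeffSign k i {i, l} = bdry k (Finsupp.single {i, l} 1) {l} := by
    rw [coeffSign, Finset.erase_insert (by simpa using hil)]
  simp only [D_eq_Dpath_of_eq_add_stdVec hB, hij', hil', hjl', coeffSign_pair_swap hij,
    coeffSign_pair_swap hil, hsign_ij, hsign_il]
  simp [hjl, hjl.symm, neg_div]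

/-- If `a = b - e_i`, `K^b I` is `⟨ij,ik,jk⟩` and `K^a I` is
`⟨j,k⟩`, then the degree-1 sylvan matrix is as displayed. -/
theorem statement7 (k : Type) [Field k] (h2 : (2:k) ≠ 0) (h3 : (3:k) ≠ 0)
    (I : Set V3) (hI : IsMonomialIdeal I) (a b : V3)
    (i j l : Fin 3) (hij : i ≠ j) (hil : i ≠ l) (hjl : j ≠ l)
    (hB : ∀ q, b q = a q + stdVec i q)
    (hKb : hasFacets (K I b) {{i, j}, {i, l}, {j, l}})
    (hKa : hasFacets (K I a) {{j}, {l}}) :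
    D k I a b 2 {j} {i, j} = coeffSign k i {i, j} / 2 ∧
    D k I a b 2 {l} {i, j} = coeffSign k j {i, j} / 2 ∧
    D k I a b 2 {j} {i, l} = coeffSign k l {i, l} / 2 ∧
    D k I a b 2 {l} {i, l} = coeffSign k i {i, l} / 2 ∧
    D k I a b 2 {j} {j, l} = 0 ∧
    D k I a b 2 {l} {j, l} = 0 :=
  statement7_general k I a b i j l hij hil hjl hB hKb hKa

end Sylvan

end
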